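/- Let 1 < p < ∞. The tensor product map B(x,y)(s,t) = x(s)y(t) is bounded from L_{p,∞}[0,1] × L_{p,∞}[0,1] into the Lorentz–Zygmund space L_{p,∞}(log L)^{-1/p}([0,1]²); that is, there is C > 0 with sup_{0<u≤1} (x⊗y)*(u) u^{1/p} ln^{-1/p}(e/u) ≤ C‖x‖_{p,∞}‖y‖_{p,∞}. -/

import Mathlib

/-!
If `‖x‖_{p,∞} ≤ N` then `μ{|x| > σ} ≤ (N/σ)^p`. By Fubini, the distribution function of
`x ⊗ y` at level `τ` is at most `∫ min(1, (M|x(s)|/τ)^p) ds`, and `(M|x|/τ)^p` lies in weak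
`L¹` with constant `a = (NM/τ)^p`, so the layer-cake formula bounds this integral by
`a(1 + log(1/a))`.
Choosing `τ` with `a = u / (2 log(e/u))` makes the bound at most `u`, hence
`(x ⊗ y)*(u) ≤ τ = NM (2 log(e/u) / u)^{1/p}`, which is the claim with `C = 2^{1/p}`.
-/

open MeasureTheory Set Filter ENNReal

/-- Lebesgue measure restricted to `[0,1]`. -/
noncomputable def muI : Measure ℝ := volume.restrict (Set.Icc (0:ℝ) 1)

/-- Lebesgue measure on the square `[0,1]²`. -/
noncomputable def muI2 : Measure (ℝ × ℝ) := muI.prod muI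

/-- Distribution function `n_f(τ) = μ{w : |f w| > τ}`. -/
noncomputable def distrib {α : Type*} [MeasurableSpace α] (μ : Measure α) (f : α → ℝ)
    (τ : ℝ) : ℝ≥0∞ :=
  μ {w | τ < |f w|}

/-- Non-increasing rearrangement of `f` with respect to `μ`. -/
noncomputable def rearr {α : Type*} [MeasurableSpace α] (μ : Measure α) (f : α → ℝ)
    (t : ℝ) : ℝ :=
  sInf {τ : ℝ | 0 ≤ τ ∧ distrib μ f τ ≤ ENNReal.ofReal t}

/-- Tensor product `(x ⊗ y)(s,t) = x s * y t`. -/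
def tensor (x y : ℝ → ℝ) : ℝ × ℝ → ℝ := fun p => x p.1 * y p.2

/-- Dilation operator `σ_t x (u) = x(u/t) χ_{[0,1]}(u/t)`. -/
noncomputable def dil (t : ℝ) (x : ℝ → ℝ) : ℝ → ℝ :=
  fun u => x (u / t) * (Set.Icc (0:ℝ) 1).indicator (fun _ => (1:ℝ)) (u / t)

open Topology

instance : IsProbabilityMeasure muI :=
  ⟨by simp [muI, Real.volume_Icc]⟩

noncomputable def weakNorm {α : Type*} [MeasurableSpace α] (μ : Measure α) (p : ℝ)
    (f : α → ℝ) : ℝ≥0∞ :=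
  ⨆ t ∈ Ioc (0:ℝ) 1, ENNReal.ofReal (rearr μ f t * t ^ (1/p))

lemma setLIntegral_Ioc_ofReal_div {a : ℝ} (ha0 : 0 < a) (ha1 : a ≤ 1) :
    ∫⁻ t in Ioc a 1, ENNReal.ofReal (a / t) = ENNReal.ofReal (a * Real.log (1 / a)) := by
  have hpos : ∀ t ∈ Ioc a 1, 0 < t := fun t ht => ha0.trans ht.1
  have hint : IntegrableOn (fun t => a / t) (Ioc a 1) :=
    ((continuousOn_const.div continuousOn_id fun t ht => (ha0.trans_le ht.1).ne').integrableOn_Icc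
      ).mono_set Ioc_subset_Icc_self
  rw [← ofReal_integral_eq_lintegral_ofReal hint ((ae_restrict_iff' measurableSet_Ioc).2
    (Eventually.of_forall fun t ht => (div_pos ha0 (hpos t ht)).le)),
    ← intervalIntegral.integral_of_le ha1]
  simp_rw [div_eq_mul_inv]
  rw [intervalIntegral.integral_const_mul, integral_inv_of_pos ha0 one_pos, one_mul, one_div]

lemma mul_one_add_log_inv_le {u L : ℝ} (hu : 0 < u) (hL : 1 ≤ L)
    (huL : Real.log (1 / u) ≤ L - 1) :
    u / (2 * L) * (1 + Real.log (1 / (u / (2 * L)))) ≤ u := by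
  have hL0 : 0 < L := one_pos.trans_le hL
  have hlog : Real.log (1 / (u / (2 * L))) = Real.log 2 + Real.log L + Real.log (1 / u) := by
    rw [one_div_div, div_eq_mul_one_div (2 * L), Real.log_mul (by positivity) (by positivity),
      Real.log_mul two_ne_zero hL0.ne']
  have hlog2 : Real.log 2 ≤ 1 := by linarith [Real.log_le_sub_one_of_pos two_pos]
  calc u / (2 * L) * (1 + Real.log (1 / (u / (2 * L)))) ≤ u / (2 * L) * (2 * L) := by
        gcongr
        linarith [Real.log_le_sub_one_of_pos hL0]
    _ = u := div_mul_cancel₀ u (by positivity)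

section Rearrangement

variable {α : Type*} [MeasurableSpace α] {μ : Measure α} {f : α → ℝ}

lemma distrib_anti : Antitone (distrib μ f) :=
  fun _ _ h => measure_mono fun _ hw => lt_of_le_of_lt h hw

lemma tendsto_distrib_atTop [IsFiniteMeasure μ] (hf : Measurable f) :
    Tendsto (distrib μ f) atTop (𝓝 0) := by
  have hempty : (⋂ τ : ℝ, {w | τ < |f w|}) = ∅ :=
    iInter_eq_empty_iff.2 fun w => ⟨|f w|, lt_irrefl (|f w|)⟩
  have h := tendsto_measure_iInter_atTop (μ := μ) (s := fun τ : ℝ => {w | τ < |f w|})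
    (fun τ => (measurableSet_lt measurable_const hf.abs).nullMeasurableSet)
    (fun _ _ h _ hw => lt_of_le_of_lt h hw) ⟨0, measure_ne_top μ _⟩
  rwa [hempty, measure_empty] at h

lemma rearr_nonneg (t : ℝ) : 0 ≤ rearr μ f t :=
  Real.sInf_nonneg fun _ h => h.1

lemma rearr_le_of_distrib_le {t τ : ℝ} (hτ : 0 ≤ τ) (h : distrib μ f τ ≤ ENNReal.ofReal t) :
    rearr μ f t ≤ τ :=
  csInf_le ⟨0, fun _ hy => hy.1⟩ ⟨hτ, h⟩

lemma distrib_le_of_rearr_lt [IsFiniteMeasure μ] (hf : Measurable f) {t σ : ℝ} (ht : 0 < t)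
    (h : rearr μ f t < σ) : distrib μ f σ ≤ ENNReal.ofReal t := by
  obtain ⟨τ₀, hτ₀⟩ := ((tendsto_distrib_atTop (μ := μ) hf).eventually
    (gt_mem_nhds (ENNReal.ofReal_pos.2 ht))).exists_forall_of_atTop
  have hne : {τ : ℝ | 0 ≤ τ ∧ distrib μ f τ ≤ ENNReal.ofReal t}.Nonempty :=
    ⟨max τ₀ 0, le_max_right _ _, (hτ₀ _ (le_max_left _ _)).le⟩
  obtain ⟨τ, hτ, hτσ⟩ := (csInf_lt_iff ⟨0, fun _ hy => hy.1⟩ hne).1 h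
  exact (distrib_anti hτσ.le).trans hτ.2

lemma rearr_mul_rpow_le_toReal_weakNorm {p t : ℝ} (hf : weakNorm μ p f ≠ ⊤)
    (ht : t ∈ Ioc (0:ℝ) 1) : rearr μ f t * t ^ (1/p) ≤ (weakNorm μ p f).toReal :=
  (ENNReal.ofReal_le_iff_le_toReal hf).1 <|
    le_iSup₂ (f := fun t _ => ENNReal.ofReal (rearr μ f t * t ^ (1/p))) t ht

lemma distrib_le_of_rearr_mul_rpow_le [IsProbabilityMeasure μ] (hf : Measurable f) {p N σ : ℝ}
    (hp : 0 < p) (hN : 0 ≤ N) (hb : ∀ t ∈ Ioc (0:ℝ) 1, rearr μ f t * t ^ (1/p) ≤ N)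
    (hσ : 0 < σ) : distrib μ f σ ≤ ENNReal.ofReal ((N / σ) ^ p) := by
  have hr : 0 ≤ (N / σ) ^ p := by positivity
  have hle : ∀ t, (N / σ) ^ p < t → distrib μ f σ ≤ ENNReal.ofReal t := by
    intro t hrt
    rcases le_or_gt t 1 with ht1 | ht1
    · have ht0 : 0 < t := hr.trans_lt hrt
      have htp : 0 < t ^ (1/p) := by positivity
      have hNσ : N / σ < t ^ (1/p) := by
        simpa [Real.rpow_rpow_inv (div_nonneg hN hσ.le) hp.ne'] using
          Real.rpow_lt_rpow hr hrt (by positivity : 0 < 1/p)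
      refine distrib_le_of_rearr_lt hf ht0 ?_
      calc rearr μ f t ≤ N / t ^ (1/p) := (le_div_iff₀ htp).2 (hb t ⟨ht0, ht1⟩)
        _ < σ := by rw [div_lt_iff₀ htp]; rwa [div_lt_iff₀ hσ, mul_comm] at hNσ
    · exact prob_le_one.trans (ENNReal.one_le_ofReal.2 ht1.le)
  exact ge_of_tendsto ENNReal.continuous_ofReal.continuousWithinAt.tendsto
    (eventually_nhdsWithin_of_forall (s := Ioi _) hle)

lemma distrib_rpow_mul_abs_le {p N c t : ℝ} (hp : 0 < p) (hN : 0 ≤ N) (hc : 0 < c)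
    (ht : 0 < t) (hf : ∀ σ, 0 < σ → distrib μ f σ ≤ ENNReal.ofReal ((N / σ) ^ p)) :
    distrib μ (fun s => (c * |f s|) ^ p) t ≤ ENNReal.ofReal ((N * c) ^ p / t) := by
  have hsub : {s | t < |(c * |f s|) ^ p|} ⊆ {s | t ^ (1/p) / c < |f s|} := by
    intro s hs
    rw [mem_ofPred_eq, abs_of_nonneg (by positivity)] at hs
    have h := Real.rpow_lt_rpow ht.le hs (by positivity : 0 < 1/p)
    rw [one_div, Real.rpow_rpow_inv (by positivity) hp.ne'] at h
    rw [mem_ofPred_eq, div_lt_iff₀ hc, mul_comm]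
    rwa [one_div]
  have hval : (N / (t ^ (1/p) / c)) ^ p = (N * c) ^ p / t := by
    rw [div_div_eq_mul_div, Real.div_rpow (by positivity) (by positivity), one_div,
      Real.rpow_inv_rpow ht.le hp.ne']
  calc distrib μ (fun s => (c * |f s|) ^ p) t ≤ distrib μ f (t ^ (1/p) / c) := measure_mono hsub
    _ ≤ ENNReal.ofReal ((N * c) ^ p / t) := hval ▸ hf _ (by positivity)

lemma lintegral_min_one_le [IsProbabilityMeasure μ] (hf : Measurable f) (hf0 : ∀ s, 0 ≤ f s)
    {a : ℝ} (ha0 : 0 < a) (ha1 : a ≤ 1)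
    (hfa : ∀ t, 0 < t → distrib μ f t ≤ ENNReal.ofReal (a / t)) :
    ∫⁻ s, min 1 (ENNReal.ofReal (f s)) ∂μ ≤ ENNReal.ofReal (a * (1 + Real.log (1 / a))) := by
  set F : ℝ → ℝ≥0∞ := fun t => μ {s | t < min 1 (f s)}
  have hlayer : ∫⁻ s, min 1 (ENNReal.ofReal (f s)) ∂μ = ∫⁻ t in Ioi 0, F t := by
    simp_rw [← ENNReal.ofReal_one, ← ENNReal.ofReal_min]
    exact lintegral_eq_lintegral_meas_lt μ
      (Eventually.of_forall fun s => le_min zero_le_one (hf0 s))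
      (measurable_const.min hf).aemeasurable
  have hsplit : Ioi (0:ℝ) = (Ioc 0 a ∪ Ioc a 1) ∪ Ioi 1 := by
    rw [Ioc_union_Ioc_eq_Ioc ha0.le ha1, Ioc_union_Ioi_eq_Ioi zero_le_one]
  have hsmall : ∫⁻ t in Ioc 0 a, F t ≤ ENNReal.ofReal a :=
    (lintegral_mono fun _ => prob_le_one).trans (by simp)
  have hmid : ∫⁻ t in Ioc a 1, F t ≤ ENNReal.ofReal (a * Real.log (1 / a)) := by
    rw [← setLIntegral_Ioc_ofReal_div ha0 ha1]
    refine setLIntegral_mono' measurableSet_Ioc fun t ht =>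
      (measure_mono fun s hs => ?_).trans (hfa t (ha0.trans ht.1))
    rw [mem_ofPred_eq, abs_of_nonneg (hf0 s)]
    exact hs.trans_le (min_le_right _ _)
  have hlarge : ∫⁻ t in Ioi 1, F t = 0 := by
    rw [setLIntegral_congr_fun measurableSet_Ioi (g := fun _ => 0) fun t ht => ?_, lintegral_zero]
    simp only [F, measure_eq_zero_iff_ae_notMem]
    exact Eventually.of_forall fun s (hs : t < min 1 (f s)) =>
      (min_le_left _ _).not_gt (lt_trans ht hs)
  calc ∫⁻ s, min 1 (ENNReal.ofReal (f s)) ∂μ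
      ≤ (∫⁻ t in Ioc 0 a, F t) + (∫⁻ t in Ioc a 1, F t) + ∫⁻ t in Ioi 1, F t := by
        rw [hlayer, hsplit]
        exact (lintegral_union_le _ _ _).trans (add_le_add_left (lintegral_union_le _ _ _) _)
    _ ≤ ENNReal.ofReal a + ENNReal.ofReal (a * Real.log (1 / a)) := by
        rw [hlarge, add_zero]; exact add_le_add hsmall hmid
    _ = ENNReal.ofReal (a * (1 + Real.log (1 / a))) := by
        rw [← ENNReal.ofReal_add ha0.le (mul_nonneg ha0.le
          (Real.log_nonneg (one_le_one_div ha0 ha1))), mul_one_add]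

end Rearrangement

section Product

variable {α β : Type*} [MeasurableSpace α] [MeasurableSpace β] {μ : Measure α} {ν : Measure β}
  {x : α → ℝ} {y : β → ℝ}

lemma distrib_prod_mul_comm [SFinite μ] [SFinite ν] (τ : ℝ) :
    distrib (μ.prod ν) (fun w => x w.1 * y w.2) τ =
      distrib (ν.prod μ) (fun w => y w.1 * x w.2) τ := by
  rw [distrib, distrib, ← (Measure.measurePreserving_swap (μ := μ) (ν := ν)).measure_preimage_equiv
    (f := MeasurableEquiv.prodComm)]
  simp_rw [mul_comm (x _)]
  rfl

lemma rearr_prod_mul_comm [SFinite μ] [SFinite ν] :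
    rearr (μ.prod ν) (fun w => x w.1 * y w.2) = rearr (ν.prod μ) (fun w => y w.1 * x w.2) := by
  ext t
  unfold rearr
  rw [funext (distrib_prod_mul_comm (μ := μ) (ν := ν) (x := x) (y := y))]

lemma distrib_prod_mul_le_lintegral [IsProbabilityMeasure ν] (hx : Measurable x)
    (hy : Measurable y) {p M τ : ℝ} (hτ : 0 < τ)
    (hyM : ∀ σ, 0 < σ → distrib ν y σ ≤ ENNReal.ofReal ((M / σ) ^ p)) :
    distrib (μ.prod ν) (fun w => x w.1 * y w.2) τ ≤
      ∫⁻ s, min 1 (ENNReal.ofReal ((M / τ * |x s|) ^ p)) ∂μ := by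
  rw [distrib, Measure.prod_apply (s := {w : α × β | τ < |x w.1 * y w.2|})
    (measurableSet_lt measurable_const ((hx.comp measurable_fst).mul (hy.comp measurable_snd)).abs)]
  refine lintegral_mono fun s => le_min prob_le_one ?_
  rcases eq_or_ne (x s) 0 with hxs | hxs
  · simp [hxs, not_lt_of_gt hτ]
  have habs : 0 < |x s| := abs_pos.2 hxs
  have hfiber : Prod.mk s ⁻¹' {w | τ < |x w.1 * y w.2|} = {t | τ / |x s| < |y t|} := by
    ext t
    simp only [mem_preimage, mem_ofPred_eq, abs_mul]
    rw [div_lt_iff₀ habs, mul_comm]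
  rw [hfiber]
  calc ν {t | τ / |x s| < |y t|} ≤ ENNReal.ofReal ((M / (τ / |x s|)) ^ p) :=
        hyM _ (div_pos hτ habs)
    _ = ENNReal.ofReal ((M / τ * |x s|) ^ p) := by rw [div_div_eq_mul_div, div_mul_eq_mul_div]

lemma distrib_prod_mul_le [IsProbabilityMeasure μ] [IsProbabilityMeasure ν] (hx : Measurable x)
    (hy : Measurable y) {p N M τ : ℝ} (hp : 0 < p) (hN : 0 < N) (hM : 0 < M) (hτ : 0 < τ)
    (ha1 : (N * M / τ) ^ p ≤ 1)
    (hxN : ∀ σ, 0 < σ → distrib μ x σ ≤ ENNReal.ofReal ((N / σ) ^ p))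
    (hyM : ∀ σ, 0 < σ → distrib ν y σ ≤ ENNReal.ofReal ((M / σ) ^ p)) :
    distrib (μ.prod ν) (fun w => x w.1 * y w.2) τ ≤
      ENNReal.ofReal ((N * M / τ) ^ p * (1 + Real.log (1 / (N * M / τ) ^ p))) := by
  refine (distrib_prod_mul_le_lintegral hx hy hτ hyM).trans
    (lintegral_min_one_le ((hx.abs.const_mul _).pow_const _) (fun s => by positivity)
      (by positivity) ha1 fun t ht => ?_)
  rw [mul_div_assoc]
  exact distrib_rpow_mul_abs_le hp hN.le (div_pos hM hτ) ht hxN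

lemma rearr_prod_mul_eq_zero_of_weakNorm_eq_zero_right [IsProbabilityMeasure ν]
    (hx : Measurable x) (hy : Measurable y) {p : ℝ} (hp : 0 < p) (hy0 : weakNorm ν p y = 0) :
    rearr (μ.prod ν) (fun w => x w.1 * y w.2) = 0 := by
  have hyM (σ : ℝ) (hσ : 0 < σ) : distrib ν y σ ≤ ENNReal.ofReal ((0 / σ) ^ p) :=
    distrib_le_of_rearr_mul_rpow_le hy hp le_rfl (fun t ht => by
      have h := rearr_mul_rpow_le_toReal_weakNorm (hy0 ▸ zero_ne_top : weakNorm ν p y ≠ ⊤) ht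
      rwa [hy0, toReal_zero] at h) hσ
  funext u
  refine le_antisymm (le_of_forall_gt_imp_ge_of_dense fun τ hτ => ?_) (rearr_nonneg u)
  refine rearr_le_of_distrib_le hτ.le ((distrib_prod_mul_le_lintegral hx hy hτ hyM).trans ?_)
  simp [Real.zero_rpow hp.ne']

lemma rearr_prod_mul_eq_zero_of_weakNorm_eq_zero_left [IsProbabilityMeasure μ]
    [IsProbabilityMeasure ν] (hx : Measurable x) (hy : Measurable y) {p : ℝ} (hp : 0 < p)
    (hx0 : weakNorm μ p x = 0) :
    rearr (μ.prod ν) (fun w => x w.1 * y w.2) = 0 := by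
  rw [rearr_prod_mul_comm]
  exact rearr_prod_mul_eq_zero_of_weakNorm_eq_zero_right hy hx hp hx0

lemma rearr_prod_mul_le [IsProbabilityMeasure μ] [IsProbabilityMeasure ν] (hx : Measurable x)
    (hy : Measurable y) {p N M u : ℝ} (hp : 0 < p) (hN : 0 < N) (hM : 0 < M)
    (hxN : ∀ t ∈ Ioc (0:ℝ) 1, rearr μ x t * t ^ (1/p) ≤ N)
    (hyM : ∀ t ∈ Ioc (0:ℝ) 1, rearr ν y t * t ^ (1/p) ≤ M) (hu : u ∈ Ioc (0:ℝ) 1) :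
    rearr (μ.prod ν) (fun w => x w.1 * y w.2) u * u ^ (1/p) *
      Real.log (Real.exp 1 / u) ^ (-(1/p)) ≤ 2 ^ (1/p) * N * M := by
  obtain ⟨hu0, hu1⟩ := hu
  set L := Real.log (Real.exp 1 / u)
  have hLu : Real.log (1 / u) = L - 1 := by
    show _ = Real.log (Real.exp 1 / u) - 1
    rw [Real.log_div (Real.exp_ne_zero 1) hu0.ne', Real.log_exp, one_div, Real.log_inv]; ring
  have hL : 1 ≤ L := by linarith [Real.log_nonneg (one_le_one_div hu0 hu1)]
  set τ := N * M * (2 * L / u) ^ (1/p)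
  have hτ : 0 < τ := by positivity
  have ha : (N * M / τ) ^ p = u / (2 * L) := by
    rw [div_mul_cancel_left₀ (by positivity), Real.inv_rpow (by positivity), one_div,
      Real.rpow_inv_rpow (by positivity) hp.ne', inv_div]
  have hdist : distrib (μ.prod ν) (fun w => x w.1 * y w.2) τ ≤ ENNReal.ofReal u := by
    refine (distrib_prod_mul_le hx hy hp hN hM hτ ?_
      (fun σ => distrib_le_of_rearr_mul_rpow_le hx hp hN.le hxN)
      (fun σ => distrib_le_of_rearr_mul_rpow_le hy hp hM.le hyM)).trans
      (ENNReal.ofReal_le_ofReal ?_)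
    · rw [ha, div_le_one (by positivity)]; linarith
    · rw [ha]; exact mul_one_add_log_inv_le hu0 hL hLu.le
  have hdil : (2 * L / u) ^ (1/p) * u ^ (1/p) = 2 ^ (1/p) * L ^ (1/p) := by
    rw [← Real.mul_rpow (by positivity) hu0.le, div_mul_cancel₀ _ hu0.ne',
      Real.mul_rpow zero_le_two (by positivity)]
  have hcancel : L ^ (1/p) * L ^ (-(1/p)) = 1 := by
    rw [← Real.rpow_add (by positivity), add_neg_cancel, Real.rpow_zero]
  calc rearr (μ.prod ν) (fun w => x w.1 * y w.2) u * u ^ (1/p) * L ^ (-(1/p))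
      ≤ τ * u ^ (1/p) * L ^ (-(1/p)) := by
        gcongr
        exact rearr_le_of_distrib_le hτ.le hdist
    _ = 2 ^ (1/p) * N * M * (L ^ (1/p) * L ^ (-(1/p))) := by
        show N * M * (2 * L / u) ^ (1/p) * u ^ (1/p) * L ^ (-(1/p)) = _
        rw [mul_assoc (N * M), hdil]; ring
    _ = 2 ^ (1/p) * N * M := by rw [hcancel, mul_one]

lemma iSup_rearr_prod_mul_le [IsProbabilityMeasure μ] [IsProbabilityMeasure ν]
    (hx : Measurable x) (hy : Measurable y) {p : ℝ} (hp : 0 < p) :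
    (⨆ u ∈ Ioc (0:ℝ) 1, ENNReal.ofReal (rearr (μ.prod ν) (fun w => x w.1 * y w.2) u *
      u ^ (1/p) * Real.log (Real.exp 1 / u) ^ (-(1/p)))) ≤
      ENNReal.ofReal (2 ^ (1/p)) * weakNorm μ p x * weakNorm ν p y := by
  by_cases h0 : weakNorm μ p x = 0 ∨ weakNorm ν p y = 0
  · have hzero : rearr (μ.prod ν) (fun w => x w.1 * y w.2) = 0 := h0.elim
      (rearr_prod_mul_eq_zero_of_weakNorm_eq_zero_left hx hy hp)
      (rearr_prod_mul_eq_zero_of_weakNorm_eq_zero_right hx hy hp)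
    simp [hzero]
  obtain ⟨hx0, hy0⟩ := not_or.1 h0
  by_cases htop : weakNorm μ p x = ⊤ ∨ weakNorm ν p y = ⊤
  · have hC : ENNReal.ofReal (2 ^ (1/p)) ≠ 0 := (ENNReal.ofReal_pos.2 (by positivity)).ne'
    have hinf : ENNReal.ofReal (2 ^ (1/p)) * weakNorm μ p x * weakNorm ν p y = ⊤ := by
      rcases htop with htop | htop
      · rw [htop, ENNReal.mul_top hC, ENNReal.top_mul hy0]
      · rw [htop, ENNReal.mul_top (mul_ne_zero hC hx0)]
    exact hinf ▸ le_top
  obtain ⟨hxt, hyt⟩ := not_or.1 htop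
  rw [← ENNReal.ofReal_toReal hxt, ← ENNReal.ofReal_toReal hyt,
    ← ENNReal.ofReal_mul (by positivity), ← ENNReal.ofReal_mul (by positivity)]
  exact iSup₂_le fun u hu => ENNReal.ofReal_le_ofReal <| rearr_prod_mul_le hx hy hp
    (ENNReal.toReal_pos hx0 hxt) (ENNReal.toReal_pos hy0 hyt)
    (fun _ => rearr_mul_rpow_le_toReal_weakNorm hxt)
    (fun _ => rearr_mul_rpow_le_toReal_weakNorm hyt) hu

end Product

theorem tensor_bounded_weakLp_LorentzZygmund (p : ℝ) (hp : 1 < p) :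
    ∃ C : ℝ, 0 < C ∧ ∀ x y : ℝ → ℝ, Measurable x → Measurable y →
      (⨆ u ∈ Set.Ioc (0:ℝ) 1, ENNReal.ofReal
        (rearr muI2 (tensor x y) u * u ^ (1/p) * Real.log (Real.exp 1 / u) ^ (-(1/p)))) ≤
      ENNReal.ofReal C *
        (⨆ t ∈ Set.Ioc (0:ℝ) 1, ENNReal.ofReal (rearr muI x t * t ^ (1/p))) *
        (⨆ t ∈ Set.Ioc (0:ℝ) 1, ENNReal.ofReal (rearr muI y t * t ^ (1/p))) :=
  ⟨2 ^ (1/p), by positivity, fun _ _ hx hy => iSup_rearr_prod_mul_le hx hy (by linarith)⟩
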